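/- Let B₀,…,B_{K−1} be a partition of ℝ into pairwise disjoint sets whose union is ℝ. The multistate Tanimoto kernel K_multi(X,Y) = J_Tan(ψ^(K)(X), ψ^(K)(Y)) is positive semidefinite on ℝⁿ: for any finite collection X₁,…,X_m ∈ ℝⁿ and any real coefficients c₁,…,c_m, Σᵢ Σⱼ cᵢ cⱼ K_multi(Xᵢ, Xⱼ) ≥ 0. -/

import Mathlib

open Finset

/-- Multistate embedding `ψ^(K) : ℝⁿ → ℝ₊^{n×K}`:
`[ψ^(K)(X)]_{i,k} = |xᵢ| · 1{xᵢ ∈ B_k}`. -/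
noncomputable def psi {n K : ℕ} (B : Fin K → Set ℝ) (X : Fin n → ℝ) :
    Fin n × Fin K → ℝ :=
  fun p => Set.indicator (B p.2) (fun _ => |X p.1|) (X p.1)

/-- Tanimoto similarity on nonnegative arrays. -/
noncomputable def JTan {ι : Type*} [Fintype ι] (u v : ι → ℝ) : ℝ :=
  if 0 < ∑ j, max (u j) (v j) then (∑ j, min (u j) (v j)) / (∑ j, max (u j) (v j)) else 1

/-- Multistate Tanimoto kernel `K_multi(X,Y) = J_Tan(ψ^(K)(X), ψ^(K)(Y))`. -/
noncomputable def Kmulti {n K : ℕ} (B : Fin K → Set ℝ) (X Y : Fin n → ℝ) : ℝ :=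
  JTan (psi B X) (psi B Y)

/-!
Write `S = ∑ q, min (u q) (v q)`, `T = ∑ q, u q + ∑ q, v q` and `r = S / T ∈ [0, 1/2]`.
When `u` and `v` are not both zero, the Tanimoto similarity is `S / (T - S) = r / (1 - r)`,
the sum of the Hadamard powers `r ^ p`, `p ≥ 1`; pairs of zero vectors add the rank-one kernel
`1{u = 0} 1{v = 0}`. The kernel `r` is a sum over coordinates of Hadamard products of
`min (a, b)` (Gram kernel of the indicators of `(0, a]` in `L²`) and `(a + b)⁻¹` (Gram kernel
of `t ↦ exp (-a t)` on `(0, ∞)`), so the Schur product theorem makes all of these kernels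
positive semidefinite.
-/

open Matrix MeasureTheory

namespace Matrix
variable {ι : Type*}

theorem posSemidef_iff_sum_mul_mul_nonneg [Fintype ι] {A : Matrix ι ι ℝ} :
    A.PosSemidef ↔ A.IsSymm ∧ ∀ c : ι → ℝ, 0 ≤ ∑ i, ∑ j, c i * c j * A i j := by
  have hquad (c : ι → ℝ) : star c ⬝ᵥ (A *ᵥ c) = ∑ i, ∑ j, c i * c j * A i j := by
    simp only [dotProduct, mulVec, star_trivial, mul_sum]
    exact sum_congr rfl fun i _ => sum_congr rfl fun j _ => by ring
  simp only [posSemidef_iff_dotProduct_mulVec, isHermitian_iff_isSymm, hquad]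

theorem PosSemidef.map_pow [Finite ι] {A : Matrix ι ι ℝ} (hA : A.PosSemidef) :
    ∀ p : ℕ, (A.map (· ^ p)).PosSemidef
  | 0 => by
    have h : A.map (· ^ 0) = vecMulVec 1 (star 1) := by ext; simp
    exact h ▸ posSemidef_vecMulVec_self_star 1
  | p + 1 => by
    have h : A.map (· ^ (p + 1)) = A.map (· ^ p) ⊙ A := by ext; simp [pow_succ]
    exact h ▸ (hA.map_pow p).hadamard hA

theorem PosSemidef.map_div_one_sub [Fintype ι] {A : Matrix ι ι ℝ} (hA : A.PosSemidef)
    (h0 : ∀ i j, 0 ≤ A i j) (h1 : ∀ i j, A i j < 1) :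
    (A.map fun x => x / (1 - x)).PosSemidef := by
  refine posSemidef_iff_sum_mul_mul_nonneg.2
    ⟨(isHermitian_iff_isSymm.1 hA.isHermitian).map _, fun c => ?_⟩
  have hgeom (i j : ι) : HasSum (fun p : ℕ => c i * c j * A i j ^ (p + 1))
      (c i * c j * (A i j / (1 - A i j))) := by
    simpa [pow_succ', div_eq_mul_inv, mul_assoc] using
      ((hasSum_geometric_of_lt_one (h0 i j) (h1 i j)).mul_left (A i j)).mul_left (c i * c j)
  refine HasSum.nonneg (fun p => ?_) (hasSum_sum fun i _ => hasSum_sum fun j _ => hgeom i j)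
  exact (posSemidef_iff_sum_mul_mul_nonneg.1 (hA.map_pow (p + 1))).2 c

theorem posSemidef_min [Finite ι] {a : ι → ℝ} (ha : ∀ i, 0 ≤ a i) :
    (of fun i j => min (a i) (a j)).PosSemidef := by
  have h : (of fun i j => min (a i) (a j)) =
      of fun i j => volume.real (Set.Ioc 0 (a i) ∩ Set.Ioc 0 (a j)) := by
    ext i j
    simp [Set.Ioc_inter_Ioc, ha i, ha j]
  exact h ▸ posSemidef_matrix_measure_inter (fun _ => measurableSet_Ioc)
    fun _ => measure_Ioc_lt_top.ne

theorem posSemidef_integral_mul [Finite ι] {α : Type*} [MeasurableSpace α]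
    {μ : Measure α} {f : ι → α → ℝ} (hf : ∀ i, MemLp (f i) 2 μ) :
    (of fun i j => ∫ x, f i x * f j x ∂μ).PosSemidef := by
  have h : (of fun i j => ∫ x, f i x * f j x ∂μ) =
      gram ℝ (fun i => (hf i).toLp (f i)) := by
    ext i j
    rw [gram_apply, L2.inner_def]
    refine integral_congr_ae ?_
    filter_upwards [(hf i).coeFn_toLp, (hf j).coeFn_toLp] with x hi hj
    simp [hi, hj, mul_comm]
  exact h ▸ posSemidef_gram ℝ _

theorem posSemidef_inv_add [Finite ι] {a : ι → ℝ} (ha : ∀ i, 0 < a i) :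
    (of fun i j => (a i + a j)⁻¹).PosSemidef := by
  have hexp (b c t : ℝ) : Real.exp (-b * t) * Real.exp (-c * t) = Real.exp (-(b + c) * t) := by
    rw [← Real.exp_add]; ring_nf
  have h : (of fun i j => (a i + a j)⁻¹) =
      of fun i j => ∫ t in Set.Ioi 0, Real.exp (-a i * t) * Real.exp (-a j * t) := by
    ext i j
    simp only [of_apply, hexp, integral_exp_mul_Ioi (neg_neg_of_pos (add_pos (ha i) (ha j)))]
    rw [neg_div, div_neg, neg_neg, mul_zero, Real.exp_zero, one_div]
  refine h ▸ posSemidef_integral_mul fun i => ?_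
  refine (memLp_two_iff_integrable_sq (by fun_prop)).2 ?_
  simpa only [sq, hexp] using (exp_neg_integrableOn_Ioi 0 (add_pos (ha i) (ha i))).integrable

end Matrix

variable {κ : Type*} [Fintype κ]

-- `x / 0 = 0` makes this `0` when `u = v = 0`.
noncomputable def minSumRatio (u v : κ → ℝ) : ℝ :=
  (∑ q, min (u q) (v q)) / (∑ q, u q + ∑ q, v q)

variable {u v : κ → ℝ}

theorem sum_max_eq_sub_sum_min (u v : κ → ℝ) :
    ∑ q, max (u q) (v q) = ∑ q, u q + ∑ q, v q - ∑ q, min (u q) (v q) := by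
  rw [eq_sub_iff_add_eq, ← sum_add_distrib, ← sum_add_distrib]
  exact sum_congr rfl fun q _ => max_add_min _ _

theorem minSumRatio_nonneg (hu : 0 ≤ u) (hv : 0 ≤ v) : 0 ≤ minSumRatio u v :=
  div_nonneg (sum_nonneg fun q _ => le_min (hu q) (hv q))
    (add_nonneg (Fintype.sum_nonneg hu) (Fintype.sum_nonneg hv))

theorem minSumRatio_lt_one (hu : 0 ≤ u) (hv : 0 ≤ v) : minSumRatio u v < 1 := by
  have hSu : ∑ q, min (u q) (v q) ≤ ∑ q, u q := sum_le_sum fun q _ => min_le_left _ _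
  have hSv : ∑ q, min (u q) (v q) ≤ ∑ q, v q := sum_le_sum fun q _ => min_le_right _ _
  rcases (add_nonneg (Fintype.sum_nonneg hu) (Fintype.sum_nonneg hv)).eq_or_lt with hT | hT
  · rw [minSumRatio, ← hT, div_zero]
    exact one_pos
  · exact (div_lt_one hT).2 (by linarith)

theorem JTan_eq_minSumRatio (hu : 0 ≤ u) (hv : 0 ≤ v) :
    JTan u v = minSumRatio u v / (1 - minSumRatio u v) +
      (if u = 0 then 1 else 0) * (if v = 0 then 1 else 0) := by
  have hNu : 0 ≤ ∑ q, u q := Fintype.sum_nonneg hu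
  have hNv : 0 ≤ ∑ q, v q := Fintype.sum_nonneg hv
  rcases (add_nonneg hNu hNv).eq_or_lt with hT | hT
  · have hu0 : u = 0 := (Fintype.sum_eq_zero_iff_of_nonneg hu).1 (by linarith)
    have hv0 : v = 0 := (Fintype.sum_eq_zero_iff_of_nonneg hv).1 (by linarith)
    subst hu0 hv0
    simp [JTan, minSumRatio]
  · have hSu : ∑ q, min (u q) (v q) ≤ ∑ q, u q := sum_le_sum fun q _ => min_le_left _ _
    have hSv : ∑ q, min (u q) (v q) ≤ ∑ q, v q := sum_le_sum fun q _ => min_le_right _ _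
    have hmax : 0 < ∑ q, max (u q) (v q) := by rw [sum_max_eq_sub_sum_min]; linarith
    have hsub : 0 < ∑ q, u q + ∑ q, v q - ∑ q, min (u q) (v q) := by linarith
    have hind : (if u = 0 then (1 : ℝ) else 0) * (if v = 0 then 1 else 0) = 0 := by
      split_ifs <;> simp_all
    rw [hind, add_zero, JTan, if_pos hmax, sum_max_eq_sub_sum_min, minSumRatio]
    field_simp

variable {ι : Type*} [Fintype ι]

theorem posSemidef_minSumRatio {u : ι → κ → ℝ} (hu : ∀ i, 0 ≤ u i) :
    (of fun i j => minSumRatio (u i) (u j)).PosSemidef := by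
  -- Any positive weight does for a zero row `u i`: that row of every `min` kernel vanishes.
  set N : ι → ℝ := fun i => if u i = 0 then 1 else ∑ q, u i q
  have hN (i : ι) : 0 < N i := by
    by_cases hi : u i = 0
    · simp [N, hi]
    · simpa [N, hi] using Fintype.sum_pos (lt_of_le_of_ne (hu i) (Ne.symm hi))
  have h : (of fun i j => minSumRatio (u i) (u j)) =
      ∑ q, (of fun i j => min (u i q) (u j q)) ⊙ (of fun i j => (N i + N j)⁻¹) := by
    ext i j
    simp only [of_apply, Matrix.sum_apply, hadamard_apply, minSumRatio, ← sum_mul, div_eq_mul_inv]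
    by_cases hi : u i = 0
    · have h0 (q : κ) : min (u i q) (u j q) = 0 := by simpa [hi] using hu j q
      simp [h0]
    by_cases hj : u j = 0
    · have h0 (q : κ) : min (u i q) (u j q) = 0 := by simpa [hj] using hu i q
      simp [h0]
    simp [N, hi, hj]
  exact h ▸ posSemidef_sum _ fun q _ =>
    (posSemidef_min fun i => hu i q).hadamard (posSemidef_inv_add hN)

theorem posSemidef_JTan {u : ι → κ → ℝ} (hu : ∀ i, 0 ≤ u i) :
    (of fun i j => JTan (u i) (u j)).PosSemidef := by
  set z : ι → ℝ := fun i => if u i = 0 then 1 else 0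
  have h : (of fun i j => JTan (u i) (u j)) =
      (of fun i j => minSumRatio (u i) (u j)).map (fun x => x / (1 - x)) +
        vecMulVec z (star z) := by
    ext i j
    simp [JTan_eq_minSumRatio (hu i) (hu j), z, vecMulVec_apply]
  exact h ▸ ((posSemidef_minSumRatio hu).map_div_one_sub
    (fun i j => minSumRatio_nonneg (hu i) (hu j)) fun i j => minSumRatio_lt_one (hu i) (hu j)).add
    (posSemidef_vecMulVec_self_star z)

theorem psi_nonneg {n K : ℕ} (B : Fin K → Set ℝ) (X : Fin n → ℝ) : 0 ≤ psi B X :=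
  fun _ => Set.indicator_nonneg (fun _ _ => abs_nonneg _) _

theorem Kmulti_psd_general {n K m : ℕ} (B : Fin K → Set ℝ)
    (X : Fin m → Fin n → ℝ) (c : Fin m → ℝ) :
    0 ≤ ∑ i : Fin m, ∑ j : Fin m, c i * c j * Kmulti B (X i) (X j) :=
  (posSemidef_iff_sum_mul_mul_nonneg.1 (posSemidef_JTan fun i => psi_nonneg B (X i))).2 c

/-- For a partition `B₀,…,B_{K−1}` of ℝ into pairwise disjoint sets covering ℝ, the
multistate Tanimoto kernel is positive semidefinite on `ℝⁿ`: for any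
`X₁,…,X_m ∈ ℝⁿ` and real coefficients `c₁,…,c_m`,
`Σᵢ Σⱼ cᵢ cⱼ K_multi(Xᵢ,Xⱼ) ≥ 0`. -/
theorem Kmulti_psd {n K m : ℕ} (B : Fin K → Set ℝ)
    (hdisj : ∀ k l, k ≠ l → Disjoint (B k) (B l))
    (hcover : ∀ x : ℝ, ∃ k, x ∈ B k)
    (X : Fin m → Fin n → ℝ) (c : Fin m → ℝ) :
    0 ≤ ∑ i : Fin m, ∑ j : Fin m, c i * c j * Kmulti B (X i) (X j) :=
  Kmulti_psd_general B X c
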